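/- Preferred semantics violates INRA: there exists an AF and an argument attacked by every preferred extension whose removal changes the set of preferred extensions. (Witness: arguments a, b, c with attacks a→b, b→c, c→a, a→c.) -/

import Mathlib

inductive Arg : Type
  | a | b | c
deriving DecidableEq

instance : Fintype Arg where
  elems := {Arg.a, Arg.b, Arg.c}
  complete := by intro x; cases x <;> simp

/-- The attack relation: a→b, b→c, c→a, a→c. -/
def att : Arg → Arg → Prop := fun x y =>
  (x = .a ∧ y = .b) ∨ (x = .b ∧ y = .c) ∨ (x = .c ∧ y = .a) ∨ (x = .a ∧ y = .c)

def conflictFree (att : Arg → Arg → Prop) (S : Set Arg) : Prop :=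
  ∀ x ∈ S, ∀ y ∈ S, ¬ att x y

def attacks (att : Arg → Arg → Prop) (S : Set Arg) (x : Arg) : Prop :=
  ∃ y ∈ S, att y x

/-- `S` defends `x` within the subframework on `Ar`. -/
def defendsIn (Ar : Set Arg) (att : Arg → Arg → Prop) (S : Set Arg) (x : Arg) : Prop :=
  ∀ y ∈ Ar, att y x → attacks att S y

/-- `S` is a complete extension of the AF restricted to `Ar`. -/
def completeExtIn (Ar : Set Arg) (att : Arg → Arg → Prop) (S : Set Arg) : Prop :=
  S ⊆ Ar ∧ conflictFree att S ∧ (∀ x ∈ S, defendsIn Ar att S x) ∧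
    (∀ x ∈ Ar, defendsIn Ar att S x → x ∈ S)

/-- `S` is a preferred extension of the AF restricted to `Ar`:
a ⊆-maximal complete extension. -/
def preferredExtIn (Ar : Set Arg) (att : Arg → Arg → Prop) (S : Set Arg) : Prop :=
  completeExtIn Ar att S ∧ ∀ T, completeExtIn Ar att T → S ⊆ T → T = S

lemma no_b_no_c (S : Set Arg) (h : completeExtIn Set.univ att S) :
    Arg.b ∉ S ∧ Arg.c ∉ S := by
  obtain ⟨-, hcf, hdef, -⟩ := h
  have hcS : Arg.c ∉ S := by
    intro hc
    have := hdef Arg.c hc Arg.b (Set.mem_univ _) (by simp [att])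
    obtain ⟨y, hy, hyb⟩ := this
    have : y = Arg.a := by rcases y <;> simp [att] at hyb ⊢
    subst this
    exact hcf Arg.a hy Arg.c hc (by simp [att])
  refine ⟨?_, hcS⟩
  intro hb
  have := hdef Arg.b hb Arg.a (Set.mem_univ _) (by simp [att])
  obtain ⟨y, hy, hya⟩ := this
  have : y = Arg.c := by rcases y <;> simp [att] at hya ⊢
  subst this
  exact hcS hy

lemma complete_a : completeExtIn Set.univ att {Arg.a} := by
  refine ⟨Set.subset_univ _, ?_, ?_, ?_⟩
  · intro x hx y hy
    simp only [Set.mem_singleton_iff] at hx hy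
    subst hx; subst hy; simp [att]
  · intro x hx y _ hya
    simp only [Set.mem_singleton_iff] at hx
    subst hx
    have : y = Arg.c := by rcases y <;> simp [att] at hya ⊢
    subst this
    exact ⟨Arg.a, rfl, by simp [att]⟩
  · intro x _ hdx
    rcases x with _ | _ | _
    · rfl
    · exfalso
      obtain ⟨y, hy, hya⟩ := hdx Arg.a (Set.mem_univ _) (by simp [att])
      simp only [Set.mem_singleton_iff] at hy
      subst hy; simp [att] at hya
    · exfalso
      obtain ⟨y, hy, hya⟩ := hdx Arg.a (Set.mem_univ _) (by simp [att])
      simp only [Set.mem_singleton_iff] at hy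
      subst hy; simp [att] at hya

lemma complete_c_restricted : completeExtIn {x | x ≠ Arg.b} att {Arg.c} := by
  refine ⟨?_, ?_, ?_, ?_⟩
  · intro x hx; simp only [Set.mem_singleton_iff] at hx; subst hx; simp
  · intro x hx y hy
    simp only [Set.mem_singleton_iff] at hx hy
    subst hx; subst hy; simp [att]
  · intro x hx y hy hyc
    simp only [Set.mem_singleton_iff] at hx
    subst hx
    have : y = Arg.a := by
      rcases y with _ | _ | _
      · rfl
      · exact absurd rfl hy
      · simp [att] at hyc
    subst this
    exact ⟨Arg.c, rfl, by simp [att]⟩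
  · intro x hx hdx
    rcases x with _ | _ | _
    · exfalso
      obtain ⟨y, hy, hyc⟩ := hdx Arg.c (by simp) (by simp [att])
      simp only [Set.mem_singleton_iff] at hy
      subst hy; simp [att] at hyc
    · exact absurd rfl hx
    · rfl

theorem preferred_violates_INRA :
    (∀ S, preferredExtIn Set.univ att S → attacks att S Arg.b) ∧
    {S | preferredExtIn {x | x ≠ Arg.b} att S} ≠ {S | preferredExtIn Set.univ att S} := by
  constructor
  · intro S ⟨hc, hmax⟩
    obtain ⟨hb, hcS⟩ := no_b_no_c S hc
    have hsub : S ⊆ {Arg.a} := by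
      intro x hx
      rcases x with _ | _ | _
      · rfl
      · exact absurd hx hb
      · exact absurd hx hcS
    have := hmax {Arg.a} complete_a hsub
    have ha : Arg.a ∈ S := this ▸ rfl
    exact ⟨Arg.a, ha, by simp [att]⟩
  · intro h
    have hc : preferredExtIn {x | x ≠ Arg.b} att {Arg.c} := by
      refine ⟨complete_c_restricted, ?_⟩
      intro T hT hsub
      ext x
      constructor
      · intro hx
        rcases x with _ | _ | _
        · exfalso
          exact hT.2.1 Arg.a hx Arg.c (hsub rfl) (by simp [att])
        · exact absurd (hT.1 hx) (by simp)
        · rfl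
      · intro hx
        simp only [Set.mem_singleton_iff] at hx
        subst hx; exact hsub rfl
    have : preferredExtIn Set.univ att {Arg.c} := by
      rw [Set.ext_iff] at h
      exact (h {Arg.c}).mp hc
    exact (no_b_no_c _ this.1).2 rfl
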